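/- Let Ω be a d-dimensional cycle and v a vertex of Ω. If F_1, ..., F_k are the d-faces of Ω containing v, then each (d-1)-path-connected component of the complex generated by F_1 \ {v}, ..., F_k \ {v} is a (d-1)-dimensional cycle. -/

import Mathlib

/-!
Erasing `v` is a bijection from the `d`-faces of `Ω` containing `insert v T` onto the link
facets containing a `(d-2)`-face `T ∌ v`, so every `(d-2)`-face lies in an even number of link
facets. The link facets containing a given `(d-2)`-face are pairwise adjacent, hence lie in a
single path component, and the parity passes to each component.
-/

namespace ConnonFaridi

open Finset
open scoped Classical

noncomputable section

variable {V : Type*} [Fintype V] [DecidableEq V]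

/-- An abstract simplicial complex on vertex type `V`: a family of faces closed under subsets. -/
def IsComplex (K : Finset (Finset V)) : Prop :=
  ∀ F ∈ K, ∀ F' ⊆ F, F' ∈ K

/-- The vertex set of a complex. -/
def verts (K : Finset (Finset V)) : Finset V := K.sup id

/-- `K` is pure of dimension `n`: every face is contained in a face of dimension `n`. -/
def IsPureDim (n : ℕ) (K : Finset (Finset V)) : Prop :=
  ∀ F ∈ K, ∃ G ∈ K, F ⊆ G ∧ G.card = n + 1

/-- The pure d-skeleton: the complex generated by (downward closure of) the d-faces of `K`. -/
def skeleton (d : ℕ) (K : Finset (Finset V)) : Finset (Finset V) :=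
  (K.filter fun G => G.card = d + 1).biUnion Finset.powerset

/-- The d-closure of a (pure d-dimensional) complex `K`, relative to the vertex set `W`:
faces are all subsets of `W` of size at most `d`, together with those subsets all of whose
(d+1)-element subsets are faces of `K`. -/
def closureOn (W : Finset V) (d : ℕ) (K : Finset (Finset V)) : Finset (Finset V) :=
  W.powerset.filter fun S => S.card ≤ d ∨ ∀ T ⊆ S, T.card = d + 1 → T ∈ K

/-- The d-closure `Δ_d(K)` on the vertex set of `K`. -/
def closure (d : ℕ) (K : Finset (Finset V)) : Finset (Finset V) :=
  closureOn (verts K) d K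

/-- The induced subcomplex of `K` on the vertex set `W`. -/
def induced (K : Finset (Finset V)) (W : Finset V) : Finset (Finset V) :=
  K.filter fun F => F ⊆ W

/-- The Z/2 simplicial boundary of a chain, encoded as the finset of faces with coefficient 1:
the boundary consists of those sets which are codimension-one subsets of an odd number of
members of the chain. (For a chain of vertices this is the reduced/augmented boundary.) -/
def bdry (c : Finset (Finset V)) : Finset (Finset V) :=
  (c.biUnion Finset.powerset).filter fun T =>
    Odd ((c.filter fun F => T ⊆ F ∧ T.card + 1 = F.card).card)

/-- Two d-faces of the family `c` are adjacent if they intersect in a (d-1)-face. -/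
def adjOn (d : ℕ) (c : Finset (Finset V)) (A B : Finset V) : Prop :=
  A ∈ c ∧ B ∈ c ∧ (A ∩ B).card = d

/-- A d-dimensional cycle, recorded by its set `Ω` of d-faces: a nonempty pure d-dimensional,
d-path-connected complex in which every (d-1)-face lies in an even number of d-faces. -/
def IsCycleFaces (d : ℕ) (Ω : Finset (Finset V)) : Prop :=
  Ω.Nonempty ∧ (∀ F ∈ Ω, F.card = d + 1) ∧
    (∀ F ∈ Ω, ∀ G ∈ Ω, Relation.ReflTransGen (adjOn d Ω) F G) ∧
    ∀ T : Finset V, T.card = d → Even ((Ω.filter fun F => T ⊆ F).card)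

/-- A d-dimensional cycle is face-minimal if no proper subset of its d-faces is a
d-dimensional cycle. -/
def FaceMinimal (d : ℕ) (Ω : Finset (Finset V)) : Prop :=
  ∀ Ω' ⊂ Ω, ¬ IsCycleFaces d Ω'

/-- The complex generated by `Ω` is j-complete: it contains all j-faces on its vertex set. -/
def CompleteOn (j : ℕ) (Ω : Finset (Finset V)) : Prop :=
  ∀ S ⊆ verts Ω, S.card = j + 1 → ∃ F ∈ Ω, S ⊆ F

/-- `C` is a chord set of the d-dimensional cycle `Ω` in the complex `Γ` (Connon–Faridi). -/
def IsChordSet (d : ℕ) (Γ Ω C : Finset (Finset V)) : Prop :=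
  (∀ F ∈ C, F ∈ Γ ∧ F.card = d + 1 ∧ F ∉ Ω) ∧
  ∃ L : List (Finset (Finset V)), 2 ≤ L.length ∧
    (∀ Ωi ∈ L, IsCycleFaces d Ωi ∧ (∀ F ∈ Ωi, F ∈ C ∪ Ω) ∧ (verts Ωi).card < (verts Ω).card) ∧
    (∀ F ∈ C ∪ Ω, ∃ Ωi ∈ L, F ∈ Ωi) ∧
    (∀ F ∈ C, Even (L.countP fun Ωi => decide (F ∈ Ωi))) ∧
    (∀ F ∈ Ω, Odd (L.countP fun Ωi => decide (F ∈ Ωi)))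

/-- `Γ` is d-chorded: it is pure of dimension `d ≥ 1` and every face-minimal, non-d-complete
d-dimensional cycle in `Γ` has a chord set in `Γ`. -/
def IsChorded (d : ℕ) (Γ : Finset (Finset V)) : Prop :=
  1 ≤ d ∧ IsPureDim d Γ ∧
    ∀ Ω ⊆ Γ, IsCycleFaces d Ω → FaceMinimal d Ω → ¬ CompleteOn d Ω →
      ∃ C, IsChordSet d Γ Ω C

/-- The reduced simplicial homology of `K` over Z/2 vanishes in dimension `i`:
every homological i-cycle is an i-boundary. -/
def HVanishes (K : Finset (Finset V)) (i : ℕ) : Prop :=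
  ∀ c : Finset (Finset V), (∀ F ∈ c, F ∈ K ∧ F.card = i + 1) → bdry c = ∅ →
    ∃ c' : Finset (Finset V), (∀ F ∈ c', F ∈ K ∧ F.card = i + 2) ∧ bdry c' = c

/-- The Stanley–Reisner complex of the square-free monomial ideal generated by the
sets (monomials) in `𝒢`: faces are the sets containing no generator. -/
def stanleyReisner (𝒢 : Finset (Finset V)) : Finset (Finset V) :=
  Finset.univ.powerset.filter fun S => ∀ G ∈ 𝒢, ¬ G ⊆ S

/-- The facet complex of the square-free monomial ideal generated by `𝒢`. -/
def facetCx (𝒢 : Finset (Finset V)) : Finset (Finset V) :=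
  Finset.univ.powerset.filter fun S => ∃ G ∈ 𝒢, S ⊆ G

/-- The d-complement of `K`: the complex whose facets are the (d+1)-element sets
that are not faces of `K`. -/
def dComplement (d : ℕ) (K : Finset (Finset V)) : Finset (Finset V) :=
  Finset.univ.powerset.filter fun S => ∃ T, S ⊆ T ∧ T.card = d + 1 ∧ T ∉ K

/-- The ideal generated by the square-free degree-(d+1) monomials `𝒢` has a (d+1)-linear
resolution over a field of characteristic 2.  (Formalized via Fröberg's criterion, which over a
field of characteristic 2 amounts to the vanishing of the reduced Z/2 homology of all induced
subcomplexes of the Stanley–Reisner complex in every dimension `i ≠ (d+1) - 2`.) -/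
def HasLinRes (d : ℕ) (𝒢 : Finset (Finset V)) : Prop :=
  ∀ (W : Finset V) (i : ℕ), i ≠ d - 1 → HVanishes (induced (stanleyReisner 𝒢) W) i

/-- A graph is chordal if every cycle of length at least 4 has a chord. -/
def IsChordalGraph (G : SimpleGraph V) : Prop :=
  ∀ (v : V) (p : G.Walk v v), p.IsCycle → 4 ≤ p.length →
    ∃ u w, u ∈ p.support ∧ w ∈ p.support ∧ G.Adj u w ∧ s(u, w) ∉ p.edges

/-- The clique complex of a graph. -/
def cliqueCx (G : SimpleGraph V) : Finset (Finset V) :=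
  Finset.univ.powerset.filter fun S => G.IsClique (S : Set V)

/-- A graph viewed as a pure 1-dimensional simplicial complex (faces: subsets of edges). -/
def graphCx (G : SimpleGraph V) : Finset (Finset V) :=
  Finset.univ.powerset.filter fun S => ∃ u v, G.Adj u v ∧ S ⊆ ({u, v} : Finset V)

/-- The generating set of the edge ideal of a graph: its edges as 2-element sets. -/
def edgeGens (G : SimpleGraph V) : Finset (Finset V) :=
  Finset.univ.powerset.filter fun S => ∃ u v, G.Adj u v ∧ S = {u, v}

section PathComponent

variable {α : Type*} [DecidableEq α] {e : ℕ} {E : Finset (Finset α)} {A B F G T : Finset α}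

instance : Std.Symm (adjOn e E) :=
  ⟨fun A B h => ⟨h.2.1, h.1, inter_comm B A ▸ h.2.2⟩⟩

theorem card_inter_eq_of_ne (hA : A.card = e + 1) (hB : B.card = e + 1) (hT : T.card = e)
    (hTA : T ⊆ A) (hTB : T ⊆ B) (hne : A ≠ B) : (A ∩ B).card = e := by
  have hle : e ≤ (A ∩ B).card := hT ▸ card_le_card (subset_inter hTA hTB)
  have hlt : (A ∩ B).card < A.card := by
    refine card_lt_card (ssubset_of_subset_of_ne inter_subset_left fun h => hne ?_)
    exact eq_of_subset_of_card_le (inter_eq_left.mp h) (by rw [hA, hB])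
  omega

def pathComponent (e : ℕ) (E : Finset (Finset α)) (F : Finset α) : Finset (Finset α) :=
  E.filter fun G => Relation.ReflTransGen (adjOn e E) F G

theorem mem_pathComponent :
    G ∈ pathComponent e E F ↔ G ∈ E ∧ Relation.ReflTransGen (adjOn e E) F G :=
  mem_filter

theorem reflTransGen_adjOn_pathComponent (h : Relation.ReflTransGen (adjOn e E) F G) :
    Relation.ReflTransGen (adjOn e (pathComponent e E F)) F G := by
  induction h with
  | refl => exact .refl
  | @tail X Y hFX hXY ih =>
    refine ih.tail ⟨mem_pathComponent.mpr ⟨hXY.1, hFX⟩, ?_, hXY.2.2⟩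
    exact mem_pathComponent.mpr ⟨hXY.2.1, hFX.tail hXY⟩

theorem filter_pathComponent_eq (hcard : ∀ G ∈ E, G.card = e + 1) (hT : T.card = e)
    (hG : G ∈ pathComponent e E F) (hTG : T ⊆ G) :
    (pathComponent e E F).filter (fun H => T ⊆ H) = E.filter (fun H => T ⊆ H) := by
  obtain ⟨hGE, hFG⟩ := mem_pathComponent.mp hG
  ext H
  simp only [mem_filter, mem_pathComponent, and_congr_left_iff, and_iff_left_iff_imp]
  intro hTH hHE
  rcases eq_or_ne G H with rfl | hne
  · exact hFG
  · exact hFG.tail ⟨hGE, hHE, card_inter_eq_of_ne (hcard G hGE) (hcard H hHE) hT hTG hTH hne⟩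

theorem isCycleFaces_pathComponent (hcard : ∀ G ∈ E, G.card = e + 1)
    (heven : ∀ T : Finset α, T.card = e → Even ((E.filter fun G => T ⊆ G).card))
    (hF : F ∈ E) : IsCycleFaces e (pathComponent e E F) := by
  have hconn : ∀ G ∈ pathComponent e E F,
      Relation.ReflTransGen (adjOn e (pathComponent e E F)) F G := fun G hG =>
    reflTransGen_adjOn_pathComponent (mem_pathComponent.mp hG).2
  refine ⟨⟨F, mem_pathComponent.mpr ⟨hF, .refl⟩⟩, fun G hG => hcard G (mem_filter.mp hG).1,
    fun G hG H hH => ?_, fun T hT => ?_⟩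
  · exact (Std.Symm.symm _ _ (hconn G hG)).trans (hconn H hH)
  · by_cases hstar : ∃ G ∈ pathComponent e E F, T ⊆ G
    · obtain ⟨G, hG, hTG⟩ := hstar
      rw [filter_pathComponent_eq hcard hT hG hTG]
      exact heven T hT
    · push Not at hstar
      rw [filter_false_of_mem hstar, card_empty]
      exact Even.zero

end PathComponent

section Link

variable {α : Type*} [DecidableEq α] {n : ℕ} {Ω : Finset (Finset α)} {v : α} {G T : Finset α}

def linkFaces (Ω : Finset (Finset α)) (v : α) : Finset (Finset α) :=
  (Ω.filter fun F => v ∈ F).image fun F => F.erase v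

theorem card_of_mem_linkFaces (hΩ : ∀ F ∈ Ω, F.card = n + 1) (hG : G ∈ linkFaces Ω v) :
    G.card = n := by
  obtain ⟨F, hF, rfl⟩ := mem_image.mp hG
  rw [card_erase_of_mem (mem_filter.mp hF).2, hΩ F (mem_filter.mp hF).1, Nat.add_sub_cancel]

theorem notMem_of_mem_linkFaces (hG : G ∈ linkFaces Ω v) : v ∉ G := by
  obtain ⟨F, -, rfl⟩ := mem_image.mp hG
  exact notMem_erase v F

theorem filter_linkFaces_eq_image (hvT : v ∉ T) :
    (linkFaces Ω v).filter (fun G => T ⊆ G) =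
      (Ω.filter fun F => insert v T ⊆ F).image fun F => F.erase v := by
  ext G
  simp only [linkFaces, mem_filter, mem_image, insert_subset_iff]
  constructor
  · rintro ⟨⟨F, ⟨hFΩ, hvF⟩, rfl⟩, hTG⟩
    exact ⟨F, ⟨hFΩ, hvF, hTG.trans (erase_subset v F)⟩, rfl⟩
  · rintro ⟨F, ⟨hFΩ, hvF, hTF⟩, rfl⟩
    exact ⟨⟨F, ⟨hFΩ, hvF⟩, rfl⟩, subset_erase.mpr ⟨hTF, hvT⟩⟩

theorem card_filter_linkFaces (hvT : v ∉ T) :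
    ((linkFaces Ω v).filter fun G => T ⊆ G).card =
      (Ω.filter fun F => insert v T ⊆ F).card := by
  rw [filter_linkFaces_eq_image hvT]
  refine card_image_of_injOn fun F hF F' hF' => erase_injOn' v ?_ ?_
  · exact (mem_filter.mp hF).2 (mem_insert_self v T)
  · exact (mem_filter.mp hF').2 (mem_insert_self v T)

theorem even_card_filter_linkFaces
    (hΩ : ∀ S : Finset α, S.card = n + 1 → Even ((Ω.filter fun F => S ⊆ F).card))
    (hT : T.card = n) : Even (((linkFaces Ω v).filter fun G => T ⊆ G).card) := by
  by_cases hvT : v ∈ T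
  · rw [filter_false_of_mem fun G hG hTG => notMem_of_mem_linkFaces hG (hTG hvT), card_empty]
    exact Even.zero
  · rw [card_filter_linkFaces hvT]
    exact hΩ _ (by rw [card_insert_of_notMem hvT, hT])

end Link

theorem stmt7_general (d : ℕ) (hd : 1 ≤ d) (Ω : Finset (Finset V)) (hΩ : IsCycleFaces d Ω)
    (v : V)
    (E : Finset (Finset V)) (hE : E = (Ω.filter fun F => v ∈ F).image fun F => F.erase v) :
    ∀ F ∈ E,
      IsCycleFaces (d - 1) (E.filter fun G => Relation.ReflTransGen (adjOn (d - 1) E) F G) := by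
  obtain ⟨e, rfl⟩ : ∃ e, d = e + 1 := ⟨d - 1, by omega⟩
  subst hE
  intro F hF
  exact isCycleFaces_pathComponent (fun G hG => card_of_mem_linkFaces hΩ.2.1 hG)
    (fun T hT => even_card_filter_linkFaces hΩ.2.2.2 hT) hF

/-- Let Ω be a d-dimensional cycle, v a vertex of Ω, and F₁,...,F_k the d-faces
of Ω containing v.  Then each (d-1)-path-connected component of the complex generated by
F₁ \ {v},...,F_k \ {v} is a (d-1)-dimensional cycle. -/
theorem stmt7 (d : ℕ) (hd : 1 ≤ d) (Ω : Finset (Finset V)) (hΩ : IsCycleFaces d Ω)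
    (v : V) (hv : v ∈ verts Ω)
    (E : Finset (Finset V)) (hE : E = (Ω.filter fun F => v ∈ F).image fun F => F.erase v) :
    ∀ F ∈ E,
      IsCycleFaces (d - 1) (E.filter fun G => Relation.ReflTransGen (adjOn (d - 1) E) F G) :=
  stmt7_general d hd Ω hΩ v E hE

end

end ConnonFaridi
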